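/- If Σᵢ 𝒟ᵢg · δqᵢ = 0 and the commutation relations δq̇ᵢ = d/dt(δqᵢ) hold, then δ⁽ᵛ⁾g = d/dt(δ⁽ᶜ⁾g); in particular, under these hypotheses δ⁽ᶜ⁾g = 0 identically implies δ⁽ᵛ⁾g = 0. -/

import Mathlib

/-!
By the product rule, `d/dt Σᵢ (∂g/∂q̇ᵢ) δqᵢ = Σᵢ (d/dt ∂g/∂q̇ᵢ) δqᵢ + Σᵢ (∂g/∂q̇ᵢ) δq̇ᵢ`, and the
hypothesis `Σᵢ 𝒟ᵢg · δqᵢ = 0` turns the first sum into `Σᵢ (∂g/∂qᵢ) δqᵢ`. The only analytic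
input is that `t ↦ ∂g/∂q̇ᵢ(q t, q̇ t, t)` is differentiable: it is a directional derivative of
the `C²` function `g` composed with the `C¹` curve `t ↦ (q t, q̇ t, t)`.
-/

open Function

/-- Partial derivative of `F(q, q̇, t)` with respect to the position coordinate `qᵢ`. -/
noncomputable def pQ {n : ℕ} (F : (Fin n → ℝ) → (Fin n → ℝ) → ℝ → ℝ) (i : Fin n)
    (a v : Fin n → ℝ) (t : ℝ) : ℝ :=
  deriv (fun z => F (Function.update a i z) v t) (a i)

/-- Partial derivative of `F(q, q̇, t)` with respect to the velocity coordinate `q̇ᵢ`. -/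
noncomputable def pV {n : ℕ} (F : (Fin n → ℝ) → (Fin n → ℝ) → ℝ → ℝ) (i : Fin n)
    (a v : Fin n → ℝ) (t : ℝ) : ℝ :=
  deriv (fun z => F a (Function.update v i z) t) (v i)

/-- The velocity of a curve `q : ℝ → ℝⁿ`. -/
noncomputable def vel {n : ℕ} (q : ℝ → Fin n → ℝ) (t : ℝ) : Fin n → ℝ :=
  fun i => deriv (fun s => q s i) t

section PhaseSpace

variable {n : ℕ}

abbrev phaseUncurry (F : (Fin n → ℝ) → (Fin n → ℝ) → ℝ → ℝ) :
    ((Fin n → ℝ) × (Fin n → ℝ)) × ℝ → ℝ :=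
  fun p => F p.1.1 p.1.2 p.2

theorem pV_eq_fderiv {F : (Fin n → ℝ) → (Fin n → ℝ) → ℝ → ℝ} {a v : Fin n → ℝ} {t : ℝ}
    (hF : DifferentiableAt ℝ (phaseUncurry F) ((a, v), t)) (i : Fin n) :
    pV F i a v t = fderiv ℝ (phaseUncurry F) ((a, v), t) ((0, Pi.single i 1), 0) := by
  have hcurve : HasDerivAt (fun z => ((a, update v i z), t)) ((0, Pi.single i 1), 0) (v i) :=
    ((hasDerivAt_const _ _).prodMk (hasDerivAt_update v i (v i))).prodMk (hasDerivAt_const _ _)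
  rw [← update_eq_self i v] at hF
  have := hF.hasFDerivAt.comp_hasDerivAt (v i) hcurve
  simpa [pV, comp_def] using this.deriv

theorem contDiff_vel {k : WithTop ℕ∞} {q : ℝ → Fin n → ℝ} (hq : ContDiff ℝ (k + 1) q) :
    ContDiff ℝ k (vel q) :=
  contDiff_pi.2 fun i => (contDiff_pi.1 hq i).deriv'

theorem contDiff_pV_along {k : WithTop ℕ∞} {F : (Fin n → ℝ) → (Fin n → ℝ) → ℝ → ℝ}
    (hF : ContDiff ℝ (k + 1) (phaseUncurry F)) {q : ℝ → Fin n → ℝ} (hq : ContDiff ℝ (k + 1) q)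
    (i : Fin n) : ContDiff ℝ k fun u => pV F i (q u) (vel q u) u := by
  have hcurve : ContDiff ℝ k fun u => ((q u, vel q u), u) :=
    ((hq.of_le le_self_add).prodMk (contDiff_vel hq)).prodMk contDiff_id
  have hdirectional : ContDiff ℝ k fun u =>
      fderiv ℝ (phaseUncurry F) ((q u, vel q u), u) ((0, Pi.single i 1), 0) :=
    ((hF.fderiv_right le_rfl).comp hcurve).clm_apply contDiff_const
  convert hdirectional using 2 with u
  exact pV_eq_fderiv (hF.differentiable (by simp) _) i

theorem hasDerivAt_sum_pV_mul {F : (Fin n → ℝ) → (Fin n → ℝ) → ℝ → ℝ}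
    (hF : ContDiff ℝ 2 (phaseUncurry F)) {q : ℝ → Fin n → ℝ} (hq : ContDiff ℝ 2 q)
    {δq : ℝ → Fin n → ℝ} {t : ℝ} (hδq : ∀ i, DifferentiableAt ℝ (fun s => δq s i) t) :
    HasDerivAt (fun s => ∑ i, pV F i (q s) (vel q s) s * δq s i)
      (∑ i, deriv (fun u => pV F i (q u) (vel q u) u) t * δq t i
        + ∑ i, pV F i (q t) (vel q t) t * deriv (fun u => δq u i) t) t := by
  rw [← Finset.sum_add_distrib]
  refine HasDerivAt.fun_sum fun i _ => HasDerivAt.mul ?_ (hδq i).hasDerivAt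
  exact ((contDiff_pV_along (k := 1) hF hq i).differentiable one_ne_zero t).hasDerivAt

end PhaseSpace

/-- If `Σᵢ 𝒟ᵢg · δqᵢ = 0` and the commutation relations hold, then
`δ⁽ᵛ⁾g = d/dt(δ⁽ᶜ⁾g)`; in particular `δ⁽ᶜ⁾g = 0` identically implies `δ⁽ᵛ⁾g = 0`. -/
theorem lagrangian_derivative_sum_zero_equivalence {n : ℕ}
    (g : (Fin n → ℝ) → (Fin n → ℝ) → ℝ → ℝ)
    (hg : ContDiff ℝ 2 (fun p : ((Fin n → ℝ) × (Fin n → ℝ)) × ℝ => g p.1.1 p.1.2 p.2))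
    (q : ℝ → Fin n → ℝ) (hq : ContDiff ℝ 2 q)
    (δq δq' : ℝ → Fin n → ℝ)
    (hδq : ∀ i, ContDiff ℝ 1 fun s => δq s i)
    -- commutation relations (C₀): δq̇ᵢ = d/dt(δqᵢ)
    (hcomm : ∀ s i, δq' s i = deriv (fun u => δq u i) s)
    -- Σᵢ 𝒟ᵢg · δqᵢ = 0 identically in t
    (hD : ∀ s, ∑ i, (deriv (fun u => pV g i (q u) (vel q u) u) s
        - pQ g i (q s) (vel q s) s) * δq s i = 0) :
    (∀ t, (∑ i, pQ g i (q t) (vel q t) t * δq t i)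
        + ∑ i, pV g i (q t) (vel q t) t * δq' t i
      = deriv (fun s => ∑ i, pV g i (q s) (vel q s) s * δq s i) t)
    ∧ ((∀ s, ∑ i, pV g i (q s) (vel q s) s * δq s i = 0) →
        ∀ t, (∑ i, pQ g i (q t) (vel q t) t * δq t i)
          + ∑ i, pV g i (q t) (vel q t) t * δq' t i = 0) := by
  have hvariation : ∀ t, (∑ i, pQ g i (q t) (vel q t) t * δq t i)
      + ∑ i, pV g i (q t) (vel q t) t * δq' t i
      = deriv (fun s => ∑ i, pV g i (q s) (vel q s) s * δq s i) t := by
    intro t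
    have hEL := hD t
    simp only [sub_mul, Finset.sum_sub_distrib, sub_eq_zero] at hEL
    rw [(hasDerivAt_sum_pV_mul hg hq fun i => (hδq i).differentiable one_ne_zero t).deriv, hEL]
    simp only [hcomm]
  refine ⟨hvariation, fun hzero t => ?_⟩
  rw [hvariation t, funext hzero, deriv_const]
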